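/- Let Φ be a cellular automaton, 𝔄 a Φ-invariant subshift (Φ(𝔄) = 𝔄), and suppose a ∈ 𝔄~ has an essential (𝔄,Φ)-interface, meaning there are two projective components of some Y_r(a) on which the transitive-component label κ takes different values. Then Φ(a) also has an essential interface with the same signature; in particular essential interfaces are persistent under Φ. -/

import Mathlib

open Topology MeasureTheory

/-- The configuration space `A^(ℤ^D)`, modelled as functions `(Fin D → ℤ) → A`. -/
abbrev Config (A : Type*) (D : ℕ) := (Fin D → ℤ) → A

/-- Sup-norm of a lattice point `z ∈ ℤ^D`. -/
def normZ {D : ℕ} (z : Fin D → ℤ) : ℕ :=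
  Finset.univ.sup fun i => (z i).natAbs

/-- The shift action: `(shift v a) z = a (z + v)`. -/
def shift {A : Type*} {D : ℕ} (v : Fin D → ℤ) (a : Config A D) : Config A D :=
  fun z => a (z + v)

/-- A subshift: a closed, shift-invariant subset of `A^(ℤ^D)`. -/
def IsSubshift {A : Type*} {D : ℕ} [TopologicalSpace A] (S : Set (Config A D)) : Prop :=
  IsClosed S ∧ ∀ v : Fin D → ℤ, shift v '' S = S

/-- A cellular automaton of radius `r`: shift-commuting and locally determined
with radius `r`. -/
def IsCA {A : Type*} {D : ℕ} (Φ : Config A D → Config A D) (r : ℕ) : Prop :=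
  (∀ (v : Fin D → ℤ) (a : Config A D), Φ (shift v a) = shift v (Φ a)) ∧
  ∀ (a b : Config A D) (z : Fin D → ℤ),
    (∀ w, normZ w ≤ r → a (z + w) = b (z + w)) → Φ a z = Φ b z

/-- The defect field `F_a(z)`: the largest radius `r` such that `a` restricted to
the ball `B(z,r)` agrees with (a translate of) some element of `S`. -/
noncomputable def defectField {A : Type*} {D : ℕ} (S : Set (Config A D))
    (a : Config A D) (z : Fin D → ℤ) : ℕ∞ :=
  ⨆ (r : ℕ) (_ : ∃ b ∈ S, ∀ w, normZ w ≤ r → b (z + w) = a (z + w)), (r : ℕ∞)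

/-- `𝔄~` : configurations with unbounded defect field. -/
def tildeSet {A : Type*} {D : ℕ} (S : Set (Config A D)) : Set (Config A D) :=
  {a | (⨆ z, defectField S a z) = ⊤}

/-- `Y_r(a) = { z : F_a(z) ≥ r }`, the non-defective region of range `r`. -/
def Yset {A : Type*} {D : ℕ} (S : Set (Config A D)) (a : Config A D) (r : ℕ) :
    Set (Fin D → ℤ) :=
  {z | (r : ℕ∞) ≤ defectField S a z}

/-- `y` and `z` are connected by a trail inside `Y` (adjacency = sup-distance 1). -/
def TrailConn {D : ℕ} (Y : Set (Fin D → ℤ)) (y z : Fin D → ℤ) : Prop :=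
  y ∈ Y ∧ Relation.ReflTransGen (fun p q => q ∈ Y ∧ normZ (q - p) = 1) y z

/-- A defect of `a` is removable if it can be erased by modifying `a` only near
the defective region. -/
def Removable {A : Type*} {D : ℕ} (S : Set (Config A D)) (a : Config A D) : Prop :=
  ∃ r : ℕ, 0 < r ∧ ∃ a' ∈ S, ∀ z ∈ Yset S a r, a' z = a z

/-- The trail-connected component of `y` in `Y_r(a)` is projective: it meets
`Y_R(a)` for every `R`. -/
def Projective {A : Type*} {D : ℕ} (S : Set (Config A D)) (a : Config A D)
    (r : ℕ) (y : Fin D → ℤ) : Prop :=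
  y ∈ Yset S a r ∧
    ∀ R : ℕ, ∃ w, TrailConn (Yset S a r) y w ∧ (R : ℕ∞) ≤ defectField S a w

/-- `λ^z = λ₁^{z₁} ⋯ λ_D^{z_D}`. -/
noncomputable def prodPow {D : ℕ} (l : Fin D → ℂ) (v : Fin D → ℤ) : ℂ :=
  ∏ i, l i ^ (v i)

/-- A continuous `(Φ,σ)`-eigenfunction on `S` with generalized eigenvalue `(l0; l)`. -/
def IsEigenFun {A : Type*} {D : ℕ} [TopologicalSpace A] (S : Set (Config A D))
    (Φ : Config A D → Config A D) (l0 : ℂ) (l : Fin D → ℂ)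
    (f : Config A D → ℂ) : Prop :=
  ContinuousOn f S ∧ (∃ a ∈ S, f a ≠ 0) ∧
  (∀ a ∈ S, f (Φ a) = l0 * f a) ∧
  ∀ a ∈ S, ∀ v : Fin D → ℤ, f (shift v a) = prodPow l v * f a

/-- The set `Spec(𝔄,Φ,σ)` of generalized eigenvalues (in the torus `𝕋^{D+1}`). -/
def Spec' {A : Type*} {D : ℕ} [TopologicalSpace A] (S : Set (Config A D))
    (Φ : Config A D → Config A D) : Set (ℂ × (Fin D → ℂ)) :=
  {p | ‖p.1‖ = 1 ∧ (∀ i, ‖p.2 i‖ = 1) ∧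
       ∃ f, IsEigenFun S Φ p.1 p.2 f}

/-- A continuous `σ`-eigenfunction on `S`. -/
def IsShiftEigenFun {A : Type*} {D : ℕ} [TopologicalSpace A] (S : Set (Config A D))
    (l : Fin D → ℂ) (f : Config A D → ℂ) : Prop :=
  ContinuousOn f S ∧ (∃ a ∈ S, f a ≠ 0) ∧
  ∀ a ∈ S, ∀ v : Fin D → ℤ, f (shift v a) = prodPow l v * f a

/-- The group `Spec(𝔄,σ)` of shift eigenvalues. -/
def SpecSigma {A : Type*} {D : ℕ} [TopologicalSpace A] (S : Set (Config A D)) :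
    Set (Fin D → ℂ) :=
  {l | (∀ i, ‖l i‖ = 1) ∧ ∃ f, IsShiftEigenFun S l f}

/-- Displacement `γ_{x,z}(λ) = λ^{x−z} f_z(a) / f_x(a)` of a dislocation. -/
noncomputable def disp {A : Type*} {D : ℕ} (l : Fin D → ℂ) (f : Config A D → ℂ)
    (a : Config A D) (x z : Fin D → ℤ) : ℂ :=
  prodPow l (x - z) * f (shift z a) / f (shift x a)

/-- `C` is comeager relative to the subspace `S`. -/
def ComeagerIn {A : Type*} {D : ℕ} [TopologicalSpace A] (S C : Set (Config A D)) : Prop :=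
  {x : S | (x : Config A D) ∈ C} ∈ residual S

/-- An a.e.-continuous (Baire-generically continuous), bounded, a.e.-nonzero
eigenfunction with eigenvalue `(l0; l)`, all equations holding comeagerly. -/
def IsAEEigenFun {A : Type*} {D : ℕ} [TopologicalSpace A] (S : Set (Config A D))
    (Φ : Config A D → Config A D) (l0 : ℂ) (l : Fin D → ℂ)
    (f : Config A D → ℂ) : Prop :=
  (∃ M : ℝ, ∀ a ∈ S, ‖f a‖ ≤ M) ∧
  ComeagerIn S {a | ContinuousWithinAt f S a} ∧
  (¬ ComeagerIn S {a | f a = 0}) ∧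
  ComeagerIn S {a | f (Φ a) = l0 * f a} ∧
  ∀ v : Fin D → ℤ, ComeagerIn S {a | f (shift v a) = prodPow l v * f a}

/-- The set `Spec_ae(𝔄,Φ,σ)` of a.e.-eigenvalues. -/
def SpecAE {A : Type*} {D : ℕ} [TopologicalSpace A] (S : Set (Config A D))
    (Φ : Config A D → Config A D) : Set (ℂ × (Fin D → ℂ)) :=
  {p | ‖p.1‖ = 1 ∧ (∀ i, ‖p.2 i‖ = 1) ∧
       ∃ f, IsAEEigenFun S Φ p.1 p.2 f}

/-!
A cellular automaton of radius `R₀` maps a configuration agreeing with some `b ∈ 𝔄` on a ball of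
radius `n + R₀` to one agreeing with `Φ b ∈ 𝔄` on the concentric ball of radius `n`. Hence
`Y_{n+R₀}(a) ⊆ Y_n(Φ a)`: unbounded defect fields stay unbounded, and trails (so projective
components) of `Y_{r+R₀}(a)` survive in `Y_r(Φ a)`. Near a point `p` of `Y_{r+R₀}(a)` the
configurations `a` and `Φ a` look like `b` and `Φ b` up to radius `r > r'`, so their labels at `p`
are those of `σ^p b` and `Φ (σ^p b)`, which lie in the same transitive component.
-/

lemma normZ_add_le {D : ℕ} (v w : Fin D → ℤ) : normZ (v + w) ≤ normZ v + normZ w :=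
  Finset.sup_le fun i _ =>
    (Int.natAbs_add_le (v i) (w i)).trans <|
      add_le_add (Finset.le_sup (f := fun i => (v i).natAbs) (Finset.mem_univ i))
        (Finset.le_sup (f := fun i => (w i).natAbs) (Finset.mem_univ i))

section CellularAutomaton

variable {A : Type*} {D : ℕ} {Φ : Config A D → Config A D} {R₀ : ℕ}

lemma IsCA.map_eq_of_eq_on_ball (hΦ : IsCA Φ R₀) {a b : Config A D} {z : Fin D → ℤ} {n : ℕ}
    (h : ∀ w, normZ w ≤ n + R₀ → a (z + w) = b (z + w)) :
    ∀ w, normZ w ≤ n → Φ a (z + w) = Φ b (z + w) := fun w hw =>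
  hΦ.2 a b (z + w) fun w' hw' => by
    rw [add_assoc]
    exact h _ ((normZ_add_le w w').trans (by omega))

variable {S : Set (Config A D)} {a : Config A D} {z : Fin D → ℤ} {n : ℕ}

lemma natCast_le_defectField_iff (hn : 0 < n) :
    (n : ℕ∞) ≤ defectField S a z ↔ ∃ b ∈ S, ∀ w, normZ w ≤ n → b (z + w) = a (z + w) := by
  refine ⟨fun h => ?_, fun h => le_iSup₂_of_le n h le_rfl⟩
  by_contra! hc
  -- an agreement on a ball of radius `m ≥ n` restricts to one of radius `n`
  have hle : defectField S a z ≤ ((n - 1 : ℕ) : ℕ∞) := by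
    refine iSup₂_le fun m ⟨b, hbS, hb⟩ => ?_
    by_cases hmn : n ≤ m
    · obtain ⟨w, hw, hbw⟩ := hc b hbS
      exact absurd (hb w (hw.trans hmn)) hbw
    · exact_mod_cast Nat.le_sub_one_of_lt (lt_of_not_ge hmn)
  have : n ≤ n - 1 := by exact_mod_cast h.trans hle
  omega

lemma le_defectField_map (hΦ : IsCA Φ R₀) (hΦS : Set.MapsTo Φ S S)
    (h : ((n + R₀ : ℕ) : ℕ∞) ≤ defectField S a z) : (n : ℕ∞) ≤ defectField S (Φ a) z := by
  rcases Nat.eq_zero_or_pos n with rfl | hn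
  · simp
  obtain ⟨b, hbS, hb⟩ := (natCast_le_defectField_iff (by omega)).1 h
  exact (natCast_le_defectField_iff hn).2 ⟨Φ b, hΦS hbS, hΦ.map_eq_of_eq_on_ball hb⟩

lemma Yset_add_subset_Yset_map (hΦ : IsCA Φ R₀) (hΦS : Set.MapsTo Φ S S) :
    Yset S a (n + R₀) ⊆ Yset S (Φ a) n :=
  fun _ hp => le_defectField_map hΦ hΦS hp

lemma map_mem_tildeSet (hΦ : IsCA Φ R₀) (hΦS : Set.MapsTo Φ S S) (ha : a ∈ tildeSet S) :
    Φ a ∈ tildeSet S := by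
  rw [tildeSet, Set.mem_ofPred_eq, iSup_eq_top] at ha ⊢
  intro c hc
  lift c to ℕ using hc.ne
  obtain ⟨p, hp⟩ := ha _ (ENat.natCast_lt_top (c + 1 + R₀))
  exact ⟨p, (ENat.natCast_lt_natCast.2 c.lt_succ_self).trans_le (le_defectField_map hΦ hΦS hp.le)⟩

lemma TrailConn.mono {Y Z : Set (Fin D → ℤ)} (hYZ : Y ⊆ Z) {y z : Fin D → ℤ}
    (h : TrailConn Y y z) : TrailConn Z y z :=
  ⟨hYZ h.1, Relation.ReflTransGen.mono (fun _ _ hpq => ⟨hYZ hpq.1, hpq.2⟩) _ _ h.2⟩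

lemma Projective.map (hΦ : IsCA Φ R₀) (hΦS : Set.MapsTo Φ S S) {r : ℕ} {y : Fin D → ℤ}
    (hy : Projective S a (r + R₀) y) : Projective S (Φ a) r y := by
  have hsub := Yset_add_subset_Yset_map (a := a) (n := r) hΦ hΦS
  refine ⟨hsub hy.1, fun R => ?_⟩
  obtain ⟨w, hw, hwR⟩ := hy.2 (R + R₀)
  exact ⟨w, hw.mono hsub, le_defectField_map hΦ hΦS hwR⟩

variable {K : ℕ} {comp : Fin K → Set (Config A D)} {κ : Config A D → Fin K} {r' : ℕ}

lemma label_shift_map_eq (hΦ : IsCA Φ R₀) (hcover : S = ⋃ i, comp i)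
    (hinvt : ∀ i (v : Fin D → ℤ), shift v '' comp i = comp i)
    (hcompΦ : ∀ i, Φ '' comp i = comp i)
    (hκloc : ∀ a b : Config A D, (∀ w, normZ w ≤ r' → a w = b w) → κ a = κ b)
    (hκclass : ∀ a ∈ S, ∀ i, a ∈ comp i ↔ κ a = i)
    (hn : r' < n) {p : Fin D → ℤ} (hp : p ∈ Yset S a (n + R₀)) :
    κ (shift p (Φ a)) = κ (shift p a) := by
  obtain ⟨b, hbS, hb⟩ := (natCast_le_defectField_iff (by omega)).1 hp
  have hlabel : ∀ i, ∀ c ∈ comp i, κ c = i := fun i c hc =>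
    (hκclass c (hcover ▸ Set.mem_iUnion.2 ⟨i, hc⟩) i).1 hc
  obtain ⟨i, hbi⟩ := Set.mem_iUnion.1 (hcover ▸ hbS)
  have hshift : shift p b ∈ comp i := hinvt i p ▸ ⟨b, hbi, rfl⟩
  have hΦshift : Φ (shift p b) ∈ comp i := hcompΦ i ▸ ⟨_, hshift, rfl⟩
  have hκa : κ (shift p a) = κ (shift p b) :=
    hκloc _ _ fun w hw => by
      simp only [shift, add_comm w p]
      exact (hb w (by omega)).symm
  have hκΦa : κ (shift p (Φ a)) = κ (shift p (Φ b)) :=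
    hκloc _ _ fun w hw => by
      simp only [shift, add_comm w p]
      exact hΦ.map_eq_of_eq_on_ball (fun w' hw' => (hb w' (by omega)).symm) w (by omega)
  rw [hκΦa, ← hΦ.1, hlabel i _ hΦshift, hκa, hlabel i _ hshift]

end CellularAutomaton

theorem essential_interface_persistent_general {A : Type*} {D K : ℕ}
    (Φ : Config A D → Config A D) (R₀ : ℕ) (hΦ : IsCA Φ R₀)
    (S : Set (Config A D)) (himg : Φ '' S = S)
    (comp : Fin K → Set (Config A D))
    (hcover : S = ⋃ i, comp i)
    (hinvt : ∀ i (v : Fin D → ℤ), shift v '' comp i = comp i)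
    (hcompΦ : ∀ i, Φ '' comp i = comp i)
    (r' : ℕ) (κ : Config A D → Fin K)
    (hκloc : ∀ a b : Config A D, (∀ w, normZ w ≤ r' → a w = b w) → κ a = κ b)
    (hκclass : ∀ a ∈ S, ∀ i, a ∈ comp i ↔ κ a = i)
    (r : ℕ) (hr : r' + 1 ≤ r)
    (a : Config A D) (ha : a ∈ tildeSet S)
    (y z : Fin D → ℤ)
    (hy : Projective S a (r + R₀) y) (hz : Projective S a (r + R₀) z)
    (hdiff : κ (shift y a) ≠ κ (shift z a)) :
    Φ a ∈ tildeSet S ∧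
    Projective S (Φ a) r y ∧ Projective S (Φ a) r z ∧
    κ (shift y (Φ a)) = κ (shift y a) ∧
    κ (shift z (Φ a)) = κ (shift z a) ∧
    κ (shift y (Φ a)) ≠ κ (shift z (Φ a)) := by
  have hΦS : Set.MapsTo Φ S S := Set.mapsTo_iff_image_subset.2 himg.subset
  have hκy := label_shift_map_eq hΦ hcover hinvt hcompΦ hκloc hκclass hr hy.1
  have hκz := label_shift_map_eq hΦ hcover hinvt hcompΦ hκloc hκclass hr hz.1
  exact ⟨map_mem_tildeSet hΦ hΦS ha, hy.map hΦ hΦS, hz.map hΦ hΦS, hκy, hκz,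
    by rwa [hκy, hκz]⟩

/-- essential interfaces persist under `Φ`, with the same
signature: the two projective components carrying distinct labels remain
projective for `Φ(a)`, with unchanged labels. -/
theorem essential_interface_persistent {A : Type*} {D K : ℕ} [Fintype A]
    [TopologicalSpace A] [DiscreteTopology A]
    (Φ : Config A D → Config A D) (R₀ : ℕ) (hΦ : IsCA Φ R₀)
    (S : Set (Config A D)) (hS : IsSubshift S) (himg : Φ '' S = S)
    (comp : Fin K → Set (Config A D))
    (hdisj : ∀ i j, i ≠ j → Disjoint (comp i) (comp j))
    (hcover : S = ⋃ i, comp i)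
    (hinvt : ∀ i (v : Fin D → ℤ), shift v '' comp i = comp i)
    (hcompΦ : ∀ i, Φ '' comp i = comp i)
    (r' : ℕ) (κ : Config A D → Fin K)
    (hκloc : ∀ a b : Config A D, (∀ w, normZ w ≤ r' → a w = b w) → κ a = κ b)
    (hκclass : ∀ a ∈ S, ∀ i, a ∈ comp i ↔ κ a = i)
    (r : ℕ) (hr : r' + 1 ≤ r)
    (a : Config A D) (ha : a ∈ tildeSet S)
    (y z : Fin D → ℤ)
    (hy : Projective S a (r + R₀) y) (hz : Projective S a (r + R₀) z)
    (hdiff : κ (shift y a) ≠ κ (shift z a)) :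
    Φ a ∈ tildeSet S ∧
    Projective S (Φ a) r y ∧ Projective S (Φ a) r z ∧
    κ (shift y (Φ a)) = κ (shift y a) ∧
    κ (shift z (Φ a)) = κ (shift z a) ∧
    κ (shift y (Φ a)) ≠ κ (shift z (Φ a)) :=
  essential_interface_persistent_general Φ R₀ hΦ S himg comp hcover hinvt hcompΦ r' κ hκloc hκclass
    r hr a ha y z hy hz hdiff
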